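/- For every ε > 0 there exists a constant C = C(ε) > 0 such that for all finitely supported functions b : ℤ² \ {0} → ℂ² and h : ℤ² \ {0} → ℂ one has | Σ_{j+k+l=0} (b_j · k) ( |l|^{-1/2} − |k|^{-1/2} ) h_k |l|^{-1/2} h_l | ≤ C ( Σ_j |j|^{4+2ε} |b_j|² )^{1/2} ( Σ_k |h_k|² )^{1/2} ( Σ_l |l|^{-1} |h_l|² )^{1/2}, where the sum on the left ranges over all triples j, k, l ∈ ℤ² \ {0} with j + k + l = 0, and b_j · k = b_j^{(1)} k₁ + b_j^{(2)} k₂. -/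

import Mathlib

/-!
Write `l = -(j + k)`. For `|l| ≥ 1` the elementary bound `x |y^{-1/2} - x^{-1/2}| ≤ |x - y|`
(for `x ≥ 0`, `y ≥ 1`) together with `||k| - |l|| ≤ |j|` gives
`|b_j · k| ||l|^{-1/2} - |k|^{-1/2}| ≤ |j| |b_j|`, so each term is at most
`|j| |b_j| · |h_k| |l|^{-1/2} |h_l|`. For fixed `j`, Cauchy–Schwarz in `k` (the map `k ↦ l` is
injective) bounds the inner sum by `‖h‖ ‖Λ^{-1/2} h‖`. Finally Cauchy–Schwarz in `j`, splitting
`|j| = |j|^{-1-ε} |j|^{2+ε}`, bounds `Σ_j |j| |b_j|` by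
`(Σ_j |j|^{-2-2ε})^{1/2} (Σ_j |j|^{4+2ε} |b_j|²)^{1/2}`, and the first factor is finite since
`2 + 2ε > 2`, the dimension of the lattice.
-/

open Real Finset

noncomputable section

/-- Euclidean norm of an integer frequency `k ∈ ℤ²`. -/
def inorm (k : Fin 2 → ℤ) : ℝ := Real.sqrt ((k 0 : ℝ)^2 + (k 1 : ℝ)^2)

def castToEuclidean : (Fin 2 → ℤ) →+ EuclideanSpace ℝ (Fin 2) :=
  ((WithLp.linearEquiv 2 ℝ (Fin 2 → ℝ)).symm : (Fin 2 → ℝ) →+ EuclideanSpace ℝ (Fin 2)).comp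
    (AddMonoidHom.compLeft (Int.castAddHom ℝ) (Fin 2))

lemma inorm_eq_norm_castToEuclidean (k : Fin 2 → ℤ) : inorm k = ‖castToEuclidean k‖ := by
  simp [inorm, castToEuclidean, EuclideanSpace.norm_eq, Fin.sum_univ_two]

lemma inorm_nonneg (k : Fin 2 → ℤ) : 0 ≤ inorm k := sqrt_nonneg _

lemma norm_le_inorm (k : Fin 2 → ℤ) : ‖k‖ ≤ inorm k := by
  rw [inorm_eq_norm_castToEuclidean]
  refine (pi_norm_le_iff_of_nonneg (norm_nonneg _)).2 fun i => ?_
  simpa [castToEuclidean, Int.norm_eq_abs] using PiLp.norm_apply_le (castToEuclidean k) i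

lemma one_le_inorm {k : Fin 2 → ℤ} (hk : k ≠ 0) : 1 ≤ inorm k := by
  obtain ⟨i, hi⟩ := Function.ne_iff.1 hk
  calc (1 : ℝ) ≤ ‖k i‖ := by
        simpa [Int.norm_eq_abs] using (Int.cast_le (R := ℝ)).2 (Int.one_le_abs hi)
    _ ≤ ‖k‖ := norm_le_pi_norm k i
    _ ≤ inorm k := norm_le_inorm k

lemma abs_inorm_sub_inorm_neg_add_le (j k : Fin 2 → ℤ) :
    |inorm k - inorm (-(j + k))| ≤ inorm j := by
  simp only [inorm_eq_norm_castToEuclidean, map_neg, map_add, norm_neg]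
  simpa using abs_norm_sub_norm_le (castToEuclidean k) (castToEuclidean j + castToEuclidean k)

lemma summable_inorm_rpow_neg {s : ℝ} (hs : 2 < s) :
    Summable fun k : Fin 2 → ℤ => inorm k ^ (-s) := by
  refine (EisensteinSeries.summable_one_div_norm_rpow hs).of_nonneg_of_le
    (fun k => rpow_nonneg (inorm_nonneg k) _) fun k => ?_
  rcases eq_or_ne k 0 with rfl | hk
  · simp [inorm]
  · exact rpow_le_rpow_of_nonpos (norm_pos_iff.2 hk) (norm_le_inorm k) (by linarith)

lemma norm_dot_le (v : Fin 2 → ℂ) (k : Fin 2 → ℤ) :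
    ‖v 0 * (k 0 : ℂ) + v 1 * (k 1 : ℂ)‖ ≤ √(‖v 0‖ ^ 2 + ‖v 1‖ ^ 2) * inorm k := by
  calc ‖v 0 * (k 0 : ℂ) + v 1 * (k 1 : ℂ)‖
      ≤ ‖v 0‖ * |(k 0 : ℝ)| + ‖v 1‖ * |(k 1 : ℝ)| := by
        simpa using norm_add_le (v 0 * (k 0 : ℂ)) (v 1 * (k 1 : ℂ))
    _ ≤ √(‖v 0‖ ^ 2 + ‖v 1‖ ^ 2) * √(|(k 0 : ℝ)| ^ 2 + |(k 1 : ℝ)| ^ 2) := by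
        simpa [Fin.sum_univ_two] using
          sum_mul_le_sqrt_mul_sqrt univ (fun i => ‖v i‖) (fun i => |(k i : ℝ)|)
    _ = √(‖v 0‖ ^ 2 + ‖v 1‖ ^ 2) * inorm k := by simp [inorm]

lemma rpow_neg_one_div_two {x : ℝ} (hx : 0 ≤ x) : x ^ (-(1:ℝ)/2) = (√x)⁻¹ := by
  rw [neg_div, rpow_neg hx, ← sqrt_eq_rpow]

lemma rpow_neg_one_div_two_sq {x : ℝ} (hx : 0 ≤ x) : (x ^ (-(1:ℝ)/2)) ^ 2 = x⁻¹ := by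
  rw [rpow_neg_one_div_two hx, inv_pow, sq_sqrt hx]

lemma sq_mul_abs_inv_sub_inv_le {a b : ℝ} (ha : 0 ≤ a) (hb : 1 ≤ b) :
    a ^ 2 * |b⁻¹ - a⁻¹| ≤ |a ^ 2 - b ^ 2| := by
  rcases ha.eq_or_lt with rfl | ha
  · simpa using sq_nonneg b
  have hb0 : 0 < b := by linarith
  calc a ^ 2 * |b⁻¹ - a⁻¹| = a * |a - b| / b := by
        rw [inv_sub_inv hb0.ne' ha.ne', abs_div, abs_mul, abs_of_pos ha, abs_of_pos hb0]
        field_simp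
    _ ≤ a * |a - b| := div_le_self (by positivity) hb
    _ ≤ (a + b) * |a - b| := by gcongr; linarith
    _ = |a ^ 2 - b ^ 2| := by rw [sq_sub_sq, abs_mul, abs_of_pos (add_pos ha hb0)]

lemma mul_abs_rpow_neg_half_sub_le {x y : ℝ} (hx : 0 ≤ x) (hy : 1 ≤ y) :
    x * |y ^ (-(1:ℝ)/2) - x ^ (-(1:ℝ)/2)| ≤ |x - y| := by
  have := sq_mul_abs_inv_sub_inv_le (sqrt_nonneg x) (one_le_sqrt.2 hy)
  rwa [sq_sqrt hx, sq_sqrt (by linarith), ← rpow_neg_one_div_two hx,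
    ← rpow_neg_one_div_two (by linarith)] at this

lemma inorm_mul_abs_rpow_neg_half_sub_le {j k : Fin 2 → ℤ} (hl : -(j + k) ≠ 0) :
    inorm k * |inorm (-(j + k)) ^ (-(1:ℝ)/2) - inorm k ^ (-(1:ℝ)/2)| ≤ inorm j :=
  (mul_abs_rpow_neg_half_sub_le (inorm_nonneg k) (one_le_inorm hl)).trans
    (abs_inorm_sub_inorm_neg_add_le j k)

lemma sum_comp_le_sum_of_nonneg {α : Type*} {s : Finset α} {f : α → ℝ} {g : α → α}
    (hg : g.Injective) (hf : ∀ x, 0 ≤ f x) (hfs : ∀ x ∉ s, f x = 0) :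
    ∑ x ∈ s, f (g x) ≤ ∑ x ∈ s, f x := by
  classical
  rw [← sum_image hg.injOn, ← sum_filter_of_ne (p := (· ∈ s)) fun x _ hx => ?_]
  · exact sum_le_sum_of_subset_of_nonneg (fun x hx => (mem_filter.1 hx).2) fun x _ _ => hf x
  · exact by_contra fun hxs => hx (hfs x hxs)

lemma sum_mul_le_sqrt_mul_sqrt_rpow {ι : Type*} (s : Finset ι) {x : ι → ℝ} (hx : ∀ i, 0 ≤ x i)
    (β : ι → ℝ) (t : ℝ) :
    ∑ i ∈ s, x i * β i ≤
      √(∑ i ∈ s, x i ^ (-(2 * t))) * √(∑ i ∈ s, x i ^ (2 + 2 * t) * β i ^ 2) := by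
  have hsplit : ∀ i, x i * β i = x i ^ (-t) * (x i ^ (1 + t) * β i) := fun i => by
    rw [← mul_assoc, ← rpow_add' (hx i) (by ring_nf; norm_num), show -t + (1 + t) = 1 by ring,
      rpow_one]
  have hsq : ∀ i (a : ℝ), (x i ^ a) ^ 2 = x i ^ (2 * a) := fun i a => by
    rw [← rpow_natCast, ← rpow_mul (hx i), mul_comm]; norm_num
  simp_rw [hsplit]
  convert sum_mul_le_sqrt_mul_sqrt s (fun i => x i ^ (-t)) (fun i => x i ^ (1 + t) * β i)
    using 4 <;> simp only [mul_pow, hsq] <;> ring_nf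

lemma norm_commutator_term_le (v : Fin 2 → ℂ) {h : (Fin 2 → ℤ) → ℂ} (hh0 : h 0 = 0)
    (j k : Fin 2 → ℤ) :
    ‖(v 0 * (k 0 : ℂ) + v 1 * (k 1 : ℂ))
        * (((inorm (-(j + k)) ^ (-(1:ℝ)/2) : ℝ) : ℂ) - ((inorm k ^ (-(1:ℝ)/2) : ℝ) : ℂ))
        * h k * ((inorm (-(j + k)) ^ (-(1:ℝ)/2) : ℝ) : ℂ) * h (-(j + k))‖
      ≤ inorm j * √(‖v 0‖ ^ 2 + ‖v 1‖ ^ 2)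
        * (‖h k‖ * (inorm (-(j + k)) ^ (-(1:ℝ)/2) * ‖h (-(j + k))‖)) := by
  set l := -(j + k)
  set w := inorm l ^ (-(1:ℝ)/2)
  have hw : 0 ≤ w := rpow_nonneg (inorm_nonneg l) _
  rw [norm_mul, norm_mul, norm_mul, norm_mul, ← Complex.ofReal_sub, Complex.norm_real,
    Complex.norm_real, norm_eq_abs, norm_eq_abs, abs_of_nonneg hw]
  by_cases hl : h l = 0
  · simp [hl]
  have hmult : ‖v 0 * (k 0 : ℂ) + v 1 * (k 1 : ℂ)‖ * |w - inorm k ^ (-(1:ℝ)/2)|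
      ≤ inorm j * √(‖v 0‖ ^ 2 + ‖v 1‖ ^ 2) :=
    calc _ ≤ √(‖v 0‖ ^ 2 + ‖v 1‖ ^ 2) * inorm k * |w - inorm k ^ (-(1:ℝ)/2)| := by
          gcongr; exact norm_dot_le v k
      _ ≤ √(‖v 0‖ ^ 2 + ‖v 1‖ ^ 2) * inorm j := by
          rw [mul_assoc]; gcongr
          exact inorm_mul_abs_rpow_neg_half_sub_le fun hl0 => hl (by simp only [l, hl0, hh0])
      _ = inorm j * √(‖v 0‖ ^ 2 + ‖v 1‖ ^ 2) := mul_comm _ _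
  calc _ = ‖v 0 * (k 0 : ℂ) + v 1 * (k 1 : ℂ)‖ * |w - inorm k ^ (-(1:ℝ)/2)|
          * (‖h k‖ * (w * ‖h l‖)) := by ring
    _ ≤ _ := by gcongr

lemma sum_norm_mul_norm_neg_add_le {G E : Type*} [AddGroup G] [SeminormedAddGroup E]
    (h : G →₀ E) (w : G → ℝ) (j : G) :
    ∑ k ∈ h.support, ‖h k‖ * (w (-(j + k)) * ‖h (-(j + k))‖)
      ≤ √(∑ k ∈ h.support, ‖h k‖ ^ 2) * √(∑ l ∈ h.support, (w l * ‖h l‖) ^ 2) := by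
  refine (sum_mul_le_sqrt_mul_sqrt _ _ _).trans
    (mul_le_mul_of_nonneg_left (sqrt_le_sqrt ?_) (sqrt_nonneg _))
  refine sum_comp_le_sum_of_nonneg (f := fun l => (w l * ‖h l‖) ^ 2)
    (neg_injective.comp (add_right_injective j)) (fun _ => sq_nonneg _) fun l hl => ?_
  simp [Finsupp.notMem_support_iff.1 hl]

lemma norm_commutator_sum_le (b : (Fin 2 → ℤ) →₀ (Fin 2 → ℂ)) (h : (Fin 2 → ℤ) →₀ ℂ)
    (hh0 : h 0 = 0) :
    ‖∑ j ∈ b.support, ∑ k ∈ h.support,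
        (b j 0 * (k 0 : ℂ) + b j 1 * (k 1 : ℂ))
        * (((inorm (-(j + k)) ^ (-(1:ℝ)/2) : ℝ) : ℂ) - ((inorm k ^ (-(1:ℝ)/2) : ℝ) : ℂ))
        * h k * ((inorm (-(j + k)) ^ (-(1:ℝ)/2) : ℝ) : ℂ) * h (-(j + k))‖
      ≤ (∑ j ∈ b.support, inorm j * √(‖b j 0‖ ^ 2 + ‖b j 1‖ ^ 2))
        * (√(∑ k ∈ h.support, ‖h k‖ ^ 2) * √(∑ l ∈ h.support, (inorm l)⁻¹ * ‖h l‖ ^ 2)) := by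
  have hweight : ∀ l, (inorm l ^ (-(1:ℝ)/2) * ‖h l‖) ^ 2 = (inorm l)⁻¹ * ‖h l‖ ^ 2 := fun l => by
    rw [mul_pow, rpow_neg_one_div_two_sq (inorm_nonneg l)]
  calc _ ≤ ∑ j ∈ b.support, ∑ k ∈ h.support, inorm j * √(‖b j 0‖ ^ 2 + ‖b j 1‖ ^ 2)
          * (‖h k‖ * (inorm (-(j + k)) ^ (-(1:ℝ)/2) * ‖h (-(j + k))‖)) :=
        (norm_sum_le _ _).trans <| sum_le_sum fun j _ => (norm_sum_le _ _).trans <|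
          sum_le_sum fun k _ => norm_commutator_term_le (b j) hh0 j k
    _ = ∑ j ∈ b.support, inorm j * √(‖b j 0‖ ^ 2 + ‖b j 1‖ ^ 2)
          * ∑ k ∈ h.support, ‖h k‖ * (inorm (-(j + k)) ^ (-(1:ℝ)/2) * ‖h (-(j + k))‖) := by
        simp_rw [mul_sum]
    _ ≤ _ := by
        rw [sum_mul]
        refine sum_le_sum fun j _ => mul_le_mul_of_nonneg_left ?_
          (mul_nonneg (sqrt_nonneg _) (sqrt_nonneg _))
        simpa only [hweight] using sum_norm_mul_norm_neg_add_le h (fun l => inorm l ^ (-(1:ℝ)/2)) j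

lemma sum_inorm_mul_le {ε : ℝ} (hε : 0 < ε) (b : (Fin 2 → ℤ) →₀ (Fin 2 → ℂ)) :
    ∑ j ∈ b.support, inorm j * √(‖b j 0‖ ^ 2 + ‖b j 1‖ ^ 2)
      ≤ √(∑' j : Fin 2 → ℤ, inorm j ^ (-(2 + 2 * ε)))
        * √(∑ j ∈ b.support, inorm j ^ ((4:ℝ) + 2 * ε) * (‖b j 0‖ ^ 2 + ‖b j 1‖ ^ 2)) := by
  have hcs := sum_mul_le_sqrt_mul_sqrt_rpow b.support inorm_nonneg
    (fun j => √(‖b j 0‖ ^ 2 + ‖b j 1‖ ^ 2)) (1 + ε)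
  rw [show -(2 * (1 + ε)) = -(2 + 2 * ε) by ring,
    show (2:ℝ) + 2 * (1 + ε) = 4 + 2 * ε by ring] at hcs
  simp only [sq_sqrt (add_nonneg (sq_nonneg _) (sq_nonneg _))] at hcs
  refine hcs.trans (mul_le_mul_of_nonneg_right (sqrt_le_sqrt ?_) (sqrt_nonneg _))
  exact (summable_inorm_rpow_neg (by linarith)).sum_le_tsum _
    fun j _ => rpow_nonneg (inorm_nonneg j) _

theorem fourier_commutator_estimate (ε : ℝ) (hε : 0 < ε) :
    ∃ C : ℝ, 0 < C ∧
      ∀ (b : (Fin 2 → ℤ) →₀ (Fin 2 → ℂ)) (h : (Fin 2 → ℤ) →₀ ℂ),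
        b 0 = 0 → h 0 = 0 →
        ‖∑ j ∈ b.support, ∑ k ∈ h.support,
            (b j 0 * (k 0 : ℂ) + b j 1 * (k 1 : ℂ))
            * (((inorm (-(j + k)) ^ (-(1:ℝ)/2) : ℝ) : ℂ)
                - ((inorm k ^ (-(1:ℝ)/2) : ℝ) : ℂ))
            * h k * ((inorm (-(j + k)) ^ (-(1:ℝ)/2) : ℝ) : ℂ) * h (-(j + k))‖
        ≤ C * (∑ j ∈ b.support, inorm j ^ ((4:ℝ) + 2 * ε) * (‖b j 0‖^2 + ‖b j 1‖^2)) ^ ((1:ℝ)/2)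
            * (∑ k ∈ h.support, ‖h k‖^2) ^ ((1:ℝ)/2)
            * (∑ l ∈ h.support, (inorm l)⁻¹ * ‖h l‖^2) ^ ((1:ℝ)/2) := by
  refine ⟨√(∑' j : Fin 2 → ℤ, inorm j ^ (-(2 + 2 * ε))) + 1, by positivity,
    fun b h _ hh0 => ?_⟩
  simp only [← sqrt_eq_rpow]
  refine (norm_commutator_sum_le b h hh0).trans ?_
  rw [← mul_assoc]
  gcongr
  exact (sum_inorm_mul_le hε b).trans (by gcongr; linarith)
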